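/- arXiv:2503.18864 — 7 statements merged into one kernel-verified Lean document; each statement's English description precedes it below -/
import Mathlib

section
/- The set of badly approximable real numbers has Lebesgue measure zero. -/
open MeasureTheory Filter Metric Topology

/-- Key lemma: for fixed `0 < C ≤ 1`, the set of reals badly approximable with
constant `C` has measure zero. -/
lemma badly_fixed_const_null (C : ℝ) (hC0 : 0 < C) (hC1 : C ≤ 1) :
    volume {α : ℝ | ∀ (p : ℤ) (q : ℕ), 0 < q →
      C / (q : ℝ) ^ 2 ≤ |α - (p : ℝ) / (q : ℝ)|} = 0 := by
  set S : Set ℝ := {α : ℝ | ∀ (p : ℤ) (q : ℕ), 0 < q →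
      C / (q : ℝ) ^ 2 ≤ |α - (p : ℝ) / (q : ℝ)|} with hSdef
  have hSclosed : IsClosed S := by
    have : S = ⋂ (p : ℤ), ⋂ (q : ℕ), ⋂ (_ : 0 < q),
        {α : ℝ | C / (q : ℝ) ^ 2 ≤ |α - (p : ℝ) / (q : ℝ)|} := by
      ext α; simp [hSdef, Set.mem_iInter]
    rw [this]
    refine isClosed_iInter fun p => isClosed_iInter fun q => isClosed_iInter fun _ => ?_
    exact isClosed_le continuous_const ((continuous_id.sub continuous_const).abs)
  by_contra hpos
  -- Lebesgue density theorem provides a density point of S in S.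
  have hae := Besicovitch.ae_tendsto_measure_inter_div (volume : Measure ℝ) S
  have hmem := ae_restrict_mem hSclosed.measurableSet (μ := (volume : Measure ℝ))
  haveI : (ae ((volume : Measure ℝ).restrict S)).NeBot := by
    rw [ae_neBot]
    intro h
    exact hpos (Measure.restrict_eq_zero.mp h)
  obtain ⟨α, hαS, hα⟩ := (hmem.and hae).exists
  -- Geometric claim: at arbitrarily small scales, a `C/2` fraction near `α` misses `S`.
  have key : ∀ n : ℕ, 0 < n → ∃ r : ℝ, 0 < r ∧ r ≤ 2 / (n + 1) ∧
      volume (S ∩ closedBall α r) / volume (closedBall α r)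
        ≤ ENNReal.ofReal (1 - C / 2) := by
    intro n hn
    obtain ⟨j, k, hk0, hkn, hjk⟩ := Real.exists_int_int_abs_mul_sub_le α hn
    have hk0' : (0 : ℝ) < (k : ℝ) := by exact_mod_cast hk0
    have hkn' : (k : ℝ) ≤ (n : ℝ) := by exact_mod_cast hkn
    have hn1 : (0 : ℝ) < (n : ℝ) + 1 := by positivity
    set d : ℝ := |α - (j : ℝ) / (k : ℝ)| with hd
    have hdub : d ≤ 1 / ((k : ℝ) * ((n : ℝ) + 1)) := by
      have h1 : |(k : ℝ) * α - (j : ℝ)| = d * (k : ℝ) := by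
        have h2 : (k : ℝ) * α - (j : ℝ) = (α - (j : ℝ) / (k : ℝ)) * (k : ℝ) := by
          field_simp
        rw [h2, abs_mul, abs_of_pos hk0', hd]
      rw [h1] at hjk
      rw [le_div_iff₀ (by positivity)]
      rw [le_div_iff₀ hn1] at hjk
      nlinarith
    -- lower bound from badly approximability, using q = k.toNat
    have hdlb : C / (k : ℝ) ^ 2 ≤ d := by
      have hq : ((k.toNat : ℕ) : ℝ) = (k : ℝ) := by
        exact_mod_cast Int.toNat_of_nonneg hk0.le
      have := hαS j k.toNat (by omega)
      rwa [hq] at this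
    have hd0 : 0 < d := lt_of_lt_of_le (by positivity) hdlb
    have hk1 : (1 : ℝ) ≤ (k : ℝ) := by exact_mod_cast hk0
    refine ⟨2 * d, by positivity, ?_, ?_⟩
    · calc 2 * d ≤ 2 * (1 / ((k : ℝ) * ((n : ℝ) + 1))) := by linarith
        _ ≤ 2 / ((n : ℝ) + 1) := by
          rw [mul_one_div, div_le_div_iff₀ (by positivity) hn1]
          nlinarith
    · -- the ball around j/k of radius C/k² is inside the closed ball and misses S
      have hsub : ball ((j : ℝ) / (k : ℝ)) (C / (k : ℝ) ^ 2) ⊆ closedBall α (2 * d) := by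
        intro β hβ
        rw [mem_ball, Real.dist_eq] at hβ
        rw [mem_closedBall, Real.dist_eq]
        calc |β - α| ≤ |β - (j : ℝ) / (k : ℝ)| + |(j : ℝ) / (k : ℝ) - α| := abs_sub_le _ _ _
          _ ≤ C / (k : ℝ) ^ 2 + d := by rw [abs_sub_comm ((j:ℝ)/(k:ℝ)) α]; linarith
          _ ≤ 2 * d := by linarith
      have hdisj : S ∩ closedBall α (2 * d) ⊆
          closedBall α (2 * d) \ ball ((j : ℝ) / (k : ℝ)) (C / (k : ℝ) ^ 2) := by
        rintro β ⟨hβS, hβB⟩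
        refine ⟨hβB, fun hβb => ?_⟩
        rw [mem_ball, Real.dist_eq] at hβb
        have hq : ((k.toNat : ℕ) : ℝ) = (k : ℝ) := by
          exact_mod_cast Int.toNat_of_nonneg hk0.le
        have := hβS j k.toNat (by omega)
        rw [hq] at this
        linarith
      have hd2 : d ≤ 1 / (k : ℝ) ^ 2 := by
        calc d ≤ 1 / ((k : ℝ) * ((n : ℝ) + 1)) := hdub
          _ ≤ 1 / ((k : ℝ) ^ 2) := by
            apply div_le_div_of_nonneg_left one_pos.le (by positivity)
            nlinarith
      have hvol : volume (S ∩ closedBall α (2 * d)) ≤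
          ENNReal.ofReal ((1 - C / 2) * (2 * (2 * d))) := by
        calc volume (S ∩ closedBall α (2 * d))
            ≤ volume (closedBall α (2 * d) \ ball ((j : ℝ) / (k : ℝ)) (C / (k : ℝ) ^ 2)) :=
              measure_mono hdisj
          _ = volume (closedBall α (2 * d)) -
              volume (ball ((j : ℝ) / (k : ℝ)) (C / (k : ℝ) ^ 2)) :=
              measure_diff hsub measurableSet_ball.nullMeasurableSet
                (by rw [Real.volume_ball]; exact ENNReal.ofReal_ne_top)
          _ = ENNReal.ofReal (2 * (2 * d)) - ENNReal.ofReal (2 * (C / (k : ℝ) ^ 2)) := by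
              rw [Real.volume_closedBall, Real.volume_ball]
          _ = ENNReal.ofReal (2 * (2 * d) - 2 * (C / (k : ℝ) ^ 2)) := by
              rw [ENNReal.ofReal_sub _ (by positivity)]
          _ ≤ ENNReal.ofReal ((1 - C / 2) * (2 * (2 * d))) := by
              apply ENNReal.ofReal_le_ofReal
              have hCd : C * d ≤ C / (k : ℝ) ^ 2 := by
                calc C * d ≤ C * (1 / (k : ℝ) ^ 2) :=
                      mul_le_mul_of_nonneg_left hd2 hC0.le
                  _ = C / (k : ℝ) ^ 2 := by rw [mul_one_div]
              nlinarith
      rw [Real.volume_closedBall]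
      refine ENNReal.div_le_of_le_mul ?_
      rw [← ENNReal.ofReal_mul (by linarith)]
      exact hvol
  -- Contradiction with density 1 at α.
  have hlt : ENNReal.ofReal (1 - C / 2) < 1 := by
    rw [ENNReal.ofReal_lt_one]
    linarith
  have hev : ∀ᶠ r in 𝓝[>] (0 : ℝ),
      ENNReal.ofReal (1 - C / 2) <
        volume (S ∩ closedBall α r) / volume (closedBall α r) :=
    hα.eventually (lt_mem_nhds hlt)
  obtain ⟨u, hu, hsub⟩ := mem_nhdsGT_iff_exists_Ioc_subset.mp hev
  have hu : (0 : ℝ) < u := hu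
  obtain ⟨n, hnu⟩ := exists_nat_gt (2 / u)
  have hn0 : 0 < n := by
    have h2 : (0 : ℝ) < (n : ℝ) := lt_trans (by positivity) hnu
    exact_mod_cast h2
  obtain ⟨r, hr0, hrn, hratio⟩ := key n hn0
  have hru : r ≤ u := by
    have h1 : 2 / ((n : ℝ) + 1) ≤ u := by
      rw [div_le_iff₀ (by positivity)]
      rw [div_lt_iff₀ hu] at hnu
      nlinarith
    linarith
  exact absurd (hsub ⟨hr0, hru⟩) (not_lt.mpr hratio)

/-- The set of badly approximable real numbers (those α for which there is C > 0 with
|α − p/q| ≥ C/q² for all integers p and positive integers q) has Lebesgue measure zero. -/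
theorem badlyApproximable_measure_zero :
    volume {α : ℝ | ∃ C > (0 : ℝ), ∀ (p : ℤ) (q : ℕ), 0 < q →
      C / (q : ℝ) ^ 2 ≤ |α - (p : ℝ) / (q : ℝ)|} = 0 := by
  have hsub : {α : ℝ | ∃ C > (0 : ℝ), ∀ (p : ℤ) (q : ℕ), 0 < q →
      C / (q : ℝ) ^ 2 ≤ |α - (p : ℝ) / (q : ℝ)|} ⊆
      ⋃ n : ℕ, {α : ℝ | ∀ (p : ℤ) (q : ℕ), 0 < q →
        (1 / ((n : ℝ) + 1)) / (q : ℝ) ^ 2 ≤ |α - (p : ℝ) / (q : ℝ)|} := by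
    rintro α ⟨C, hC0, hC⟩
    obtain ⟨n, hn⟩ := exists_nat_gt (1 / C)
    refine Set.mem_iUnion.mpr ⟨n, fun p q hq => ?_⟩
    refine le_trans ?_ (hC p q hq)
    apply div_le_div_of_nonneg_right _ (by positivity)
    · rw [div_lt_iff₀ hC0] at hn
      rw [div_le_iff₀ (by positivity : (0:ℝ) < (n:ℝ) + 1)]
      nlinarith
  refine measure_mono_null hsub (measure_iUnion_null fun n => ?_)
  exact badly_fixed_const_null (1 / ((n : ℝ) + 1)) (by positivity)
    (by rw [div_le_one (by positivity)]; linarith)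
end

section
/- Let ℓ > 0 and suppose there are sequences of integers (p_n) and positive integers (q_n) with q_n → ∞ and q_n |q_n ℓ − p_n| → 0. Define u_n on (0,ℓ) by u_n(x) = (ℓ q_n / p_n) sin(p_n π x / ℓ). Then the L² norm on (0,ℓ) of (u_n'' + q_n² π² u_n) tends to 0 as n → ∞, while the L² norm of x ↦ sin(q_n π x) on (0,1) equals 1/√2 for all n. -/
open Real Filter Topology MeasureTheory

lemma second_deriv_c_sin (c a : ℝ) :
    deriv (deriv (fun y => c * Real.sin (a * y))) = fun x => -(c * a ^ 2) * Real.sin (a * x) := by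
  have h1 : deriv (fun y => c * Real.sin (a * y)) = fun y => c * a * Real.cos (a * y) := by
    funext y
    have h : HasDerivAt (fun y => c * Real.sin (a * y)) (c * a * Real.cos (a * y)) y := by
      have := (((hasDerivAt_id y).const_mul a).sin).const_mul c
      simpa [mul_comm, mul_left_comm, mul_assoc] using this
    exact h.deriv
  rw [h1]
  funext x
  have h : HasDerivAt (fun y => c * a * Real.cos (a * y)) (-(c * a ^ 2) * Real.sin (a * x)) x := by
    have := (((hasDerivAt_id x).const_mul a).cos).const_mul (c * a)
    refine this.congr_deriv ?_
    simp only [id]; ring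
  exact h.deriv

set_option maxHeartbeats 1000000 in
/-- Quasimode computation: if q_n → ∞ and q_n|q_n ℓ − p_n| → 0, then for
u_n(x) = (ℓ q_n/p_n) sin(p_n π x/ℓ) the L²(0,ℓ) norm of u_n'' + q_n²π²u_n tends to 0,
while the L²(0,1) norm of x ↦ sin(q_n π x) equals 1/√2 for every n. -/
theorem quasimode_residual (ℓ : ℝ) (hℓ : 0 < ℓ) (p : ℕ → ℤ) (q : ℕ → ℕ)
    (hq : ∀ n, 0 < q n) (hp : ∀ n, p n ≠ 0)
    (hqtop : Tendsto (fun n => (q n : ℝ)) atTop atTop)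
    (hsmall : Tendsto (fun n => (q n : ℝ) * |(q n : ℝ) * ℓ - (p n : ℝ)|) atTop (𝓝 0)) :
    Tendsto (fun n => Real.sqrt (∫ x in Set.Ioo 0 ℓ,
        (deriv (deriv (fun y => (ℓ * (q n : ℝ) / (p n : ℝ)) * Real.sin ((p n : ℝ) * π * y / ℓ))) x
          + (q n : ℝ) ^ 2 * π ^ 2 *
            ((ℓ * (q n : ℝ) / (p n : ℝ)) * Real.sin ((p n : ℝ) * π * x / ℓ))) ^ 2))
      atTop (𝓝 0) ∧
    ∀ n, Real.sqrt (∫ x in Set.Ioo (0 : ℝ) 1, (Real.sin ((q n : ℝ) * π * x)) ^ 2)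
      = 1 / Real.sqrt 2 := by
  constructor
  · -- abbreviations
    set c : ℕ → ℝ := fun n => ℓ * (q n : ℝ) / (p n : ℝ) with hc
    set a : ℕ → ℝ := fun n => (p n : ℝ) * π / ℓ with ha
    set K : ℕ → ℝ := fun n => c n * ((q n : ℝ) ^ 2 * π ^ 2 - a n ^ 2) with hK
    -- rewrite the integrand
    have hint : ∀ n, (fun x => (deriv (deriv (fun y =>
          c n * Real.sin ((p n : ℝ) * π * y / ℓ))) x
          + (q n : ℝ) ^ 2 * π ^ 2 * (c n * Real.sin ((p n : ℝ) * π * x / ℓ))) ^ 2)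
        = fun x => (K n * Real.sin (a n * x)) ^ 2 := by
      intro n
      have hfun : (fun y => c n * Real.sin ((p n : ℝ) * π * y / ℓ))
          = fun y => c n * Real.sin (a n * y) := by
        funext y
        rw [show (p n : ℝ) * π * y / ℓ = a n * y by rw [ha]; ring]
      rw [hfun]
      funext x
      rw [second_deriv_c_sin]
      rw [show (p n : ℝ) * π * x / ℓ = a n * x by rw [ha]; ring]
      ring
    -- bound on the integral
    have hbound : ∀ n, Real.sqrt (∫ x in Set.Ioo 0 ℓ, (K n * Real.sin (a n * x)) ^ 2)
        ≤ |K n| * Real.sqrt ℓ := by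
      intro n
      have hmeas : (volume (Set.Ioo (0:ℝ) ℓ)) < ⊤ := by
        simp [Real.volume_Ioo]
      have hle : ‖∫ x in Set.Ioo (0:ℝ) ℓ, (K n * Real.sin (a n * x)) ^ 2‖
          ≤ K n ^ 2 * (volume (Set.Ioo (0:ℝ) ℓ)).toReal := by
        apply MeasureTheory.norm_setIntegral_le_of_norm_le_const hmeas
        · intro x _
          rw [Real.norm_eq_abs, abs_of_nonneg (sq_nonneg _), mul_pow]
          have h1 : Real.sin (a n * x) ^ 2 ≤ 1 := by
            rw [← Real.sin_sq_add_cos_sq (a n * x)]; nlinarith [sq_nonneg (Real.cos (a n * x))]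
          nlinarith [sq_nonneg (K n)]
      have hvol : (volume (Set.Ioo (0:ℝ) ℓ)).toReal = ℓ := by
        simp [Real.volume_Ioo, ENNReal.toReal_ofReal hℓ.le]
      rw [Real.norm_eq_abs] at hle
      calc Real.sqrt (∫ x in Set.Ioo 0 ℓ, (K n * Real.sin (a n * x)) ^ 2)
          ≤ Real.sqrt (K n ^ 2 * ℓ) := by
            apply Real.sqrt_le_sqrt
            calc (∫ x in Set.Ioo 0 ℓ, (K n * Real.sin (a n * x)) ^ 2)
                ≤ |∫ x in Set.Ioo 0 ℓ, (K n * Real.sin (a n * x)) ^ 2| := le_abs_self _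
              _ ≤ K n ^ 2 * ℓ := by rw [hvol] at hle; exact hle
        _ = |K n| * Real.sqrt ℓ := by
            rw [Real.sqrt_mul (sq_nonneg _), Real.sqrt_sq_eq_abs]
    -- |K n| → 0
    have hKabs : Tendsto (fun n => |K n|) atTop (𝓝 0) := by
      have hev1 : ∀ᶠ n in atTop, (q n : ℝ) * |(q n : ℝ) * ℓ - (p n : ℝ)| < 1/2 :=
        hsmall.eventually (gt_mem_nhds (by norm_num))
      have hev2 : ∀ᶠ n in atTop, (2 : ℝ) / ℓ ≤ (q n : ℝ) := hqtop.eventually_ge_atTop _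
      have hevb : ∀ᶠ n in atTop, |K n| ≤ 6 * π ^ 2 / ℓ *
          ((q n : ℝ) * |(q n : ℝ) * ℓ - (p n : ℝ)|) := by
        filter_upwards [hev1, hev2] with n h1 h2
        have hq1 : (1 : ℝ) ≤ (q n : ℝ) := by exact_mod_cast hq n
        have hql : (2 : ℝ) ≤ (q n : ℝ) * ℓ := by
          have := mul_le_mul_of_nonneg_right h2 hℓ.le
          calc (2:ℝ) = 2 / ℓ * ℓ := by field_simp
            _ ≤ (q n : ℝ) * ℓ := this
        have habs : |(q n : ℝ) * ℓ - (p n : ℝ)| ≤ 1/2 := by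
          nlinarith [abs_nonneg ((q n : ℝ) * ℓ - (p n : ℝ))]
        have hpl : (q n : ℝ) * ℓ - 1/2 ≤ (p n : ℝ) := by
          have := abs_le.mp habs; linarith [this.2]
        have hpu : (p n : ℝ) ≤ (q n : ℝ) * ℓ + 1/2 := by
          have := abs_le.mp habs; linarith [this.1]
        have hppos : (0 : ℝ) < (p n : ℝ) := by linarith
        have hpge : (q n : ℝ) * ℓ / 2 ≤ (p n : ℝ) := by linarith
        -- K n = π^2 / ℓ * q * (qℓ - p) * (qℓ + p) / p
        have hKeq : K n = π ^ 2 / (ℓ * (p n : ℝ)) * ((q n : ℝ) *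
            (((q n : ℝ) * ℓ - (p n : ℝ)) * ((q n : ℝ) * ℓ + (p n : ℝ)))) := by
          rw [hK, hc, ha]
          field_simp
          ring
        rw [hKeq, abs_mul, abs_mul, abs_mul]
        have hqnn : |(q n : ℝ)| = (q n : ℝ) := abs_of_nonneg (by positivity)
        rw [hqnn]
        have hsum : |(q n : ℝ) * ℓ + (p n : ℝ)| ≤ 3 * ((q n : ℝ) * ℓ) := by
          rw [abs_of_pos (by nlinarith)]; nlinarith
        have hcoef : |π ^ 2 / (ℓ * (p n : ℝ))| = π ^ 2 / (ℓ * (p n : ℝ)) := by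
          rw [abs_of_pos]; positivity
        rw [hcoef]
        have hfin : π ^ 2 / (ℓ * (p n : ℝ)) * ((q n : ℝ) *
            (|(q n : ℝ) * ℓ - (p n : ℝ)| * |(q n : ℝ) * ℓ + (p n : ℝ)|))
            ≤ π ^ 2 / (ℓ * (p n : ℝ)) * ((q n : ℝ) *
            (|(q n : ℝ) * ℓ - (p n : ℝ)| * (3 * ((q n : ℝ) * ℓ)))) := by
          apply mul_le_mul_of_nonneg_left _ (by positivity)
          apply mul_le_mul_of_nonneg_left _ (by positivity)
          exact mul_le_mul_of_nonneg_left hsum (abs_nonneg _)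
        refine hfin.trans ?_
        rw [div_mul_eq_mul_div, div_le_iff₀ (by positivity)]
        have key : 6 * π ^ 2 / ℓ * ((q n : ℝ) * |(q n : ℝ) * ℓ - (p n : ℝ)|) * (ℓ * (p n : ℝ))
            = 6 * π ^ 2 * ((q n : ℝ) * |(q n : ℝ) * ℓ - (p n : ℝ)|) * (p n : ℝ) := by
          field_simp
        rw [key]
        have h6 : 3 * ((q n : ℝ) * ℓ) ≤ 6 * (p n : ℝ) := by linarith
        have hnn : (0:ℝ) ≤ π ^ 2 * ((q n : ℝ) * |(q n : ℝ) * ℓ - (p n : ℝ)|) := by positivity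
        nlinarith [mul_le_mul_of_nonneg_left h6 hnn]
      have hg : Tendsto (fun n => 6 * π ^ 2 / ℓ *
          ((q n : ℝ) * |(q n : ℝ) * ℓ - (p n : ℝ)|)) atTop (𝓝 0) := by
        have := hsmall.const_mul (6 * π ^ 2 / ℓ)
        simpa using this
      exact squeeze_zero' (Eventually.of_forall fun n => abs_nonneg _) hevb hg
    -- conclude
    have hlim : Tendsto (fun n => |K n| * Real.sqrt ℓ) atTop (𝓝 0) := by
      have := hKabs.mul_const (Real.sqrt ℓ)
      simpa using this
    apply squeeze_zero' (Eventually.of_forall fun n => Real.sqrt_nonneg _)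
      (Eventually.of_forall fun n => ?_) hlim
    rw [hint n]
    exact hbound n
  · intro n
    have hqpos : (0 : ℝ) < (q n : ℝ) := by exact_mod_cast hq n
    have hqπ : (q n : ℝ) * π ≠ 0 := by positivity
    have hI : (∫ x in Set.Ioo (0:ℝ) 1, (Real.sin ((q n : ℝ) * π * x)) ^ 2) = 1 / 2 := by
      rw [← MeasureTheory.integral_Ioc_eq_integral_Ioo,
        ← intervalIntegral.integral_of_le (by norm_num : (0:ℝ) ≤ 1)]
      have := intervalIntegral.integral_comp_mul_left (a := 0) (b := 1)
        (fun u => Real.sin u ^ 2) hqπ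
      simp only [mul_assoc] at this ⊢
      rw [this]
      rw [mul_zero, mul_one, integral_sin_sq]
      rw [Real.sin_nat_mul_pi]
      simp [smul_eq_mul]
      field_simp
    rw [hI, show (1:ℝ)/2 = 2⁻¹ by norm_num, Real.sqrt_inv, one_div]
end

section
/- Let L > 0 and ℓ₁,…,ℓ_d > 0 with Σ ℓ_j = L. For each n large enough there exist integers p_{j,n} ≥ 1 and q_n with ⌊√n⌋ ≤ q_n ≤ n^d such that, setting μ_n = 2πq_n/L and μ_{j,n} = 2πp_{j,n}/ℓ_j, one has: (a) |μ_{j,n} − μ_n| ≤ 2π/(ℓ_j √n) for each j; (b) μ_n/μ_{j,n} → 1 as n → ∞; (c) Σ_{j=1}^d (ℓ_j/L) μ_{j,n}^{-2} → 0; and (d) Σ_{j=1}^d (ℓ_j/L) (μ_{j,n} − μ_n²/μ_{j,n})² ≤ C/n for a constant C depending only on ℓ₁,…,ℓ_d. -/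
open Real Filter Topology

set_option maxHeartbeats 2000000


lemma dirichlet_box (d : ℕ) (α : Fin d → ℝ) (N : ℕ) (hN : 0 < N) :
    ∃ (q : ℕ) (p : Fin d → ℤ), 1 ≤ q ∧ q ≤ N ^ d ∧ ∀ j, |(q : ℝ) * α j - p j| < 1 / N := by
  have hN' : (0:ℝ) < N := by exact_mod_cast hN
  have hbox : ∀ (k : ℕ) (j : Fin d), (⌊(N:ℝ) * Int.fract ((k:ℝ) * α j)⌋).toNat < N := by
    intro k j
    have h1 : (N:ℝ) * Int.fract ((k:ℝ) * α j) < N := by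
      nlinarith [Int.fract_lt_one ((k:ℝ) * α j), Int.fract_nonneg ((k:ℝ) * α j)]
    have : ⌊(N:ℝ) * Int.fract ((k:ℝ) * α j)⌋ < N := by
      exact_mod_cast Int.floor_lt.2 (by exact_mod_cast h1)
    omega
  set F : Fin (N ^ d + 1) → (Fin d → Fin N) :=
    fun k j => ⟨(⌊(N:ℝ) * Int.fract ((k:ℕ) * α j)⌋).toNat, hbox k j⟩ with hF
  have hcard : Fintype.card (Fin d → Fin N) < Fintype.card (Fin (N ^ d + 1)) := by
    simp [Fintype.card_fun]
  obtain ⟨x, y, hxy, hfeq⟩ := Fintype.exists_ne_map_eq_of_card_lt F hcard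
  -- WLOG x < y
  rcases lt_or_gt_of_ne (Fin.val_ne_of_ne hxy) with h | h
  case _ =>
    refine ⟨(y:ℕ) - (x:ℕ), fun j => ⌊(y:ℕ) * α j⌋ - ⌊(x:ℕ) * α j⌋, by omega,
      by have := y.isLt; omega, fun j => ?_⟩
    have hc : ((y:ℕ) - (x:ℕ) : ℕ) = ((y:ℕ) : ℝ) - ((x:ℕ) : ℝ) := by
      push_cast [Nat.cast_sub h.le]; ring
    have hfl : ⌊(N:ℝ) * Int.fract ((x:ℕ) * α j)⌋ = ⌊(N:ℝ) * Int.fract ((y:ℕ) * α j)⌋ := by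
      have := congrFun hfeq j
      simp only [hF, Fin.mk.injEq] at this
      have h0x : 0 ≤ ⌊(N:ℝ) * Int.fract ((x:ℕ) * α j)⌋ :=
        Int.floor_nonneg.2 (mul_nonneg hN'.le (Int.fract_nonneg _))
      have h0y : 0 ≤ ⌊(N:ℝ) * Int.fract ((y:ℕ) * α j)⌋ :=
        Int.floor_nonneg.2 (mul_nonneg hN'.le (Int.fract_nonneg _))
      omega
    have habs : |(N:ℝ) * Int.fract ((x:ℕ) * α j) - (N:ℝ) * Int.fract ((y:ℕ) * α j)| < 1 :=
      Int.abs_sub_lt_one_of_floor_eq_floor hfl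
    have key : |Int.fract ((y:ℕ) * α j) - Int.fract ((x:ℕ) * α j)| < 1 / N := by
      rw [abs_sub_comm] at habs
      rw [← mul_sub] at habs
      rw [abs_mul, abs_of_pos hN'] at habs
      rw [lt_div_iff₀ hN']
      linarith
    have : ((((y:ℕ) - (x:ℕ) : ℕ)):ℝ) * α j - ((⌊(y:ℕ) * α j⌋ - ⌊(x:ℕ) * α j⌋ : ℤ) : ℝ)
        = Int.fract ((y:ℕ) * α j) - Int.fract ((x:ℕ) * α j) := by
      rw [hc]
      unfold Int.fract
      push_cast
      ring
    rw [this]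
    exact key
  case _ =>
    refine ⟨(x:ℕ) - (y:ℕ), fun j => ⌊(x:ℕ) * α j⌋ - ⌊(y:ℕ) * α j⌋, by omega,
      by have := x.isLt; omega, fun j => ?_⟩
    have hc : ((x:ℕ) - (y:ℕ) : ℕ) = ((x:ℕ) : ℝ) - ((y:ℕ) : ℝ) := by
      push_cast [Nat.cast_sub h.le]; ring
    have hfl : ⌊(N:ℝ) * Int.fract ((y:ℕ) * α j)⌋ = ⌊(N:ℝ) * Int.fract ((x:ℕ) * α j)⌋ := by
      have := congrFun hfeq j
      simp only [hF, Fin.mk.injEq] at this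
      have h0x : 0 ≤ ⌊(N:ℝ) * Int.fract ((x:ℕ) * α j)⌋ :=
        Int.floor_nonneg.2 (mul_nonneg hN'.le (Int.fract_nonneg _))
      have h0y : 0 ≤ ⌊(N:ℝ) * Int.fract ((y:ℕ) * α j)⌋ :=
        Int.floor_nonneg.2 (mul_nonneg hN'.le (Int.fract_nonneg _))
      omega
    have habs : |(N:ℝ) * Int.fract ((y:ℕ) * α j) - (N:ℝ) * Int.fract ((x:ℕ) * α j)| < 1 :=
      Int.abs_sub_lt_one_of_floor_eq_floor hfl
    have key : |Int.fract ((x:ℕ) * α j) - Int.fract ((y:ℕ) * α j)| < 1 / N := by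
      rw [abs_sub_comm] at habs
      rw [← mul_sub] at habs
      rw [abs_mul, abs_of_pos hN'] at habs
      rw [lt_div_iff₀ hN']
      linarith
    have : ((((x:ℕ) - (y:ℕ) : ℕ)):ℝ) * α j - ((⌊(x:ℕ) * α j⌋ - ⌊(y:ℕ) * α j⌋ : ℤ) : ℝ)
        = Int.fract ((x:ℕ) * α j) - Int.fract ((y:ℕ) * α j) := by
      rw [hc]
      unfold Int.fract
      push_cast
      ring
    rw [this]
    exact key

lemma dirichlet_strong (d : ℕ) (hd : 0 < d) (α : Fin d → ℝ) (n : ℕ) (hn : 4 ≤ n) :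
    ∃ (q : ℤ) (p : Fin d → ℤ), ⌊Real.sqrt n⌋ ≤ q ∧ q ≤ (n : ℤ) ^ d ∧
      ∀ j, |(q : ℝ) * α j - p j| ≤ 1 / Real.sqrt n := by
  have hn0 : 0 < n := by omega
  have hn0' : (0:ℝ) < n := by exact_mod_cast hn0
  have hsq : (2:ℝ) ≤ Real.sqrt n := by
    rw [show (2:ℝ) = Real.sqrt 4 by
      rw [show (4:ℝ) = 2^2 by norm_num, Real.sqrt_sq (by norm_num)]]
    exact Real.sqrt_le_sqrt (by exact_mod_cast hn)
  have hsqpos : (0:ℝ) < Real.sqrt n := by linarith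
  set s : ℕ := ⌊Real.sqrt n⌋₊ with hs
  have hsle : (s:ℝ) ≤ Real.sqrt n := Nat.floor_le (Real.sqrt_nonneg _)
  have hs2 : 2 ≤ s := by
    have := Nat.le_floor (α := ℝ) (n := 2) (by exact_mod_cast hsq)
    exact_mod_cast this
  have hfloor_eq : (s:ℤ) = ⌊Real.sqrt n⌋ := Int.natCast_floor_eq_floor (Real.sqrt_nonneg _)
  have hssq : (s:ℝ) * s ≤ n := by
    calc (s:ℝ) * s ≤ Real.sqrt n * Real.sqrt n := by nlinarith
    _ = n := Real.mul_self_sqrt hn0'.le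
  have hsn : s * s ≤ n := by exact_mod_cast hssq
  have hinv : 1 / (n:ℝ) ≤ 1 / Real.sqrt n := by
    apply one_div_le_one_div_of_le hsqpos
    nlinarith [Real.mul_self_sqrt hn0'.le]
  obtain ⟨q₀, p₀, hq1, hqN, herr⟩ := dirichlet_box d α n hn0
  rcases le_or_gt s q₀ with hcase | hcase
  · refine ⟨(q₀:ℤ), p₀, ?_, ?_, fun j => ?_⟩
    · rw [← hfloor_eq]; exact_mod_cast hcase
    · exact_mod_cast hqN
    · push_cast
      exact le_trans (herr j).le hinv
  · refine ⟨((s * q₀ : ℕ) : ℤ), fun j => (s:ℤ) * p₀ j, ?_, ?_, fun j => ?_⟩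
    · rw [← hfloor_eq]
      have : s ≤ s * q₀ := Nat.le_mul_of_pos_right s hq1
      exact_mod_cast this
    · have h1 : s * q₀ ≤ n := le_trans (Nat.mul_le_mul_left s (by omega)) hsn
      have h2 : n ≤ n ^ d := Nat.le_self_pow (by omega) n
      exact_mod_cast le_trans h1 h2
    · have h1 : |((s * q₀ : ℕ) : ℝ) * α j - ((s:ℤ) * p₀ j : ℤ)| = (s:ℝ) * |(q₀:ℝ) * α j - p₀ j| := by
        push_cast
        rw [show ((s:ℝ)) * ((q₀:ℝ)) * α j - (s:ℝ) * (p₀ j : ℝ) = (s:ℝ) * ((q₀:ℝ) * α j - (p₀ j : ℝ)) by ring,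
          abs_mul, abs_of_nonneg (show (0:ℝ) ≤ (s:ℝ) by positivity)]
      show |((s * q₀ : ℕ) : ℝ) * α j - ((s:ℤ) * p₀ j : ℤ)| ≤ 1 / Real.sqrt n
      rw [h1]
      have h2 : (s:ℝ) * |(q₀:ℝ) * α j - p₀ j| ≤ (s:ℝ) * (1 / n) :=
        mul_le_mul_of_nonneg_left (herr j).le (by positivity)
      refine le_trans h2 ?_
      rw [mul_one_div, div_le_div_iff₀ hn0' hsqpos]
      nlinarith [Real.mul_self_sqrt hn0'.le]

/-- Key quantitative estimate for the construction of unobserved quasimodes: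
given lengths ℓ₁,…,ℓ_d > 0 with sum L, for all n large enough there are integers
p_{j,n} ≥ 1 and ⌊√n⌋ ≤ q_n ≤ n^d such that, with μ_n = 2πq_n/L and
μ_{j,n} = 2πp_{j,n}/ℓ_j:
(a) |μ_{j,n} − μ_n| ≤ 2π/(ℓ_j √n);
(b) μ_n/μ_{j,n} → 1;
(c) Σ_j (ℓ_j/L) μ_{j,n}⁻² → 0;
(d) Σ_j (ℓ_j/L) (μ_{j,n} − μ_n²/μ_{j,n})² ≤ C/n for a constant C depending only on the ℓ_j. -/
theorem quasimode_frequencies (d : ℕ) (hd : 0 < d) (L : ℝ) (hL : 0 < L)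
    (ℓ : Fin d → ℝ) (hℓ : ∀ j, 0 < ℓ j) (hsum : ∑ j, ℓ j = L) :
    ∃ (N₀ : ℕ) (C : ℝ) (p : ℕ → Fin d → ℤ) (q : ℕ → ℤ), 0 < C ∧
      (∀ n ≥ N₀, (∀ j, 1 ≤ p n j) ∧ ⌊Real.sqrt n⌋ ≤ q n ∧ q n ≤ (n : ℤ) ^ d) ∧
      (∀ n ≥ N₀, ∀ j,
        |2 * π * (p n j : ℝ) / ℓ j - 2 * π * (q n : ℝ) / L| ≤ 2 * π / (ℓ j * Real.sqrt n)) ∧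
      (∀ j, Tendsto (fun n => (2 * π * (q n : ℝ) / L) / (2 * π * (p n j : ℝ) / ℓ j))
        atTop (𝓝 1)) ∧
      Tendsto (fun n => ∑ j, (ℓ j / L) * ((2 * π * (p n j : ℝ) / ℓ j) ^ 2)⁻¹)
        atTop (𝓝 0) ∧
      (∀ n ≥ N₀, ∑ j, (ℓ j / L) *
          ((2 * π * (p n j : ℝ) / ℓ j)
            - (2 * π * (q n : ℝ) / L) ^ 2 / (2 * π * (p n j : ℝ) / ℓ j)) ^ 2
        ≤ C / n) := by
  have hne : Nonempty (Fin d) := ⟨⟨0, hd⟩⟩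
  have hπ := Real.pi_pos
  -- the minimum length
  set ε := Finset.univ.inf' Finset.univ_nonempty ℓ with hεdef
  have hεle : ∀ j, ε ≤ ℓ j := fun j => Finset.inf'_le ℓ (Finset.mem_univ j)
  have hεpos : 0 < ε := (Finset.lt_inf'_iff _).2 fun j _ => hℓ j
  have hjL : ∀ j, ℓ j ≤ L := fun j =>
    hsum ▸ Finset.single_le_sum (fun i _ => (hℓ i).le) (Finset.mem_univ j)
  have hεL : ε ≤ L := le_trans (hεle ⟨0, hd⟩) (hjL _)
  -- the choice of p and q
  have Hex : ∀ n : ℕ, ∃ (q : ℤ) (p : Fin d → ℤ), 4 ≤ n →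
      (⌊Real.sqrt n⌋ ≤ q ∧ q ≤ (n : ℤ) ^ d ∧
        ∀ j, |(q : ℝ) * (ℓ j / L) - p j| ≤ 1 / Real.sqrt n) := by
    intro n
    by_cases h : 4 ≤ n
    · obtain ⟨q, p, h1, h2, h3⟩ := dirichlet_strong d hd (fun j => ℓ j / L) n h
      exact ⟨q, p, fun _ => ⟨h1, h2, h3⟩⟩
    · exact ⟨1, fun _ => 1, fun hc => absurd hc h⟩
  choose q p hq using Hex
  set N₀ : ℕ := max 4 ⌈((2 * ε + 2 * L) / ε) ^ 2⌉₊ with hN₀def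
  have main : ∀ n, N₀ ≤ n → ∀ j,
      1 ≤ p n j ∧
      |2 * π * (p n j : ℝ) / ℓ j - 2 * π * (q n : ℝ) / L| ≤ 2 * π / (ℓ j * Real.sqrt n) ∧
      |(2 * π * (q n : ℝ) / L) / (2 * π * (p n j : ℝ) / ℓ j) - 1| ≤ 4 * L / ε / n ∧
      ((2 * π * (p n j : ℝ) / ℓ j) ^ 2)⁻¹ ≤ 4 * L ^ 2 / π ^ 2 / n ∧
      (ℓ j / L) * ((2 * π * (p n j : ℝ) / ℓ j)
          - (2 * π * (q n : ℝ) / L) ^ 2 / (2 * π * (p n j : ℝ) / ℓ j)) ^ 2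
        ≤ 36 * π ^ 2 / (ℓ j * L) / n := by
    intro n hn j
    have h4n : 4 ≤ n := le_trans (le_max_left _ _) hn
    have hn4 : (4 : ℝ) ≤ n := by exact_mod_cast h4n
    have hn0' : (0 : ℝ) < n := by linarith
    have hnR : ((2 * ε + 2 * L) / ε) ^ 2 ≤ (n : ℝ) := by
      have h1 : (⌈((2 * ε + 2 * L) / ε) ^ 2⌉₊ : ℝ) ≤ n := by
        exact_mod_cast le_trans (le_max_right 4 _) hn
      exact le_trans (Nat.le_ceil _) h1
    obtain ⟨hql, hqu, hkeyfun⟩ := hq n h4n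
    have hkeyj := hkeyfun j
    set x := Real.sqrt (n : ℝ) with hxdef
    have hx0 : 0 ≤ x := Real.sqrt_nonneg _
    have hxx : x * x = n := Real.mul_self_sqrt hn0'.le
    have hxR : (2 * ε + 2 * L) / ε ≤ x := by
      have h2 := Real.sqrt_le_sqrt hnR
      rwa [Real.sqrt_sq (by positivity)] at h2
    have hεx : 2 * ε + 2 * L ≤ ε * x := by
      rw [div_le_iff₀ hεpos] at hxR; linarith
    have hx4 : 4 ≤ x := by nlinarith
    have hx0' : (0 : ℝ) < x := by linarith
    have hfloor : x - 1 ≤ (⌊x⌋ : ℝ) := (Int.sub_one_lt_floor x).le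
    have hqx : x - 1 ≤ (q n : ℝ) := le_trans hfloor (by exact_mod_cast hql)
    set u := ℓ j with hudef
    have hu0 : 0 < u := hℓ j
    have hεu : ε ≤ u := hεle j
    have huL : u ≤ L := hjL j
    have hbd := abs_le.1 hkeyj
    have h1x : 1 / x ≤ 1 / 4 := one_div_le_one_div_of_le (by norm_num) hx4
    -- p ≥ 1
    have hql' : (x - 1) * ε ≤ (q n : ℝ) * u :=
      mul_le_mul hqx hεu hεpos.le (by linarith)
    have h2qu : 2 * L ≤ (q n : ℝ) * u := by nlinarith
    have hq2 : (2 : ℝ) ≤ (q n : ℝ) * (u / L) := by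
      rw [show (q n : ℝ) * (u / L) = (q n : ℝ) * u / L by ring, le_div_iff₀ hL]
      linarith
    have hp1' : (1 : ℝ) ≤ (p n j : ℝ) := by linarith [hbd.1]
    have hp1 : 1 ≤ p n j := by exact_mod_cast hp1'
    set B := 2 * π * (q n : ℝ) / L with hB
    set A := 2 * π * (p n j : ℝ) / u with hA
    clear_value A B u x ε N₀
    clear hq hkeyfun hεdef hN₀def hxdef hudef hnR hxR hn h4n hεle hjL hℓ hsum hfloor hql hqu
    have hApos : 0 < A := by
      rw [hA]; exact div_pos (by nlinarith) hu0
    have hBlow : π * (x - 1) / L * 2 ≤ B := by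
      rw [hB, show π * (x - 1) / L * 2 = 2 * π * (x - 1) / L by ring]
      exact (div_le_div_iff_of_pos_right hL).2 (mul_le_mul_of_nonneg_left hqx (by positivity))
    have hBpos : 0 < B := by
      have h0 : 0 < π * (x - 1) / L := div_pos (by nlinarith) hL
      linarith
    -- (a)
    have hdiff : A - B = (2 * π / u) * ((p n j : ℝ) - (q n : ℝ) * (u / L)) := by
      rw [hA, hB]
      field_simp
    have ha : |A - B| ≤ 2 * π / (u * x) := by
      rw [hdiff, abs_mul, abs_of_pos (div_pos (by positivity) hu0 : (0:ℝ) < 2 * π / u)]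
      have habs2 : |(p n j : ℝ) - (q n : ℝ) * (u / L)| ≤ 1 / x := by
        rw [abs_sub_comm]; exact hkeyj
      calc 2 * π / u * |(p n j : ℝ) - (q n : ℝ) * (u / L)| ≤ 2 * π / u * (1 / x) :=
            mul_le_mul_of_nonneg_left habs2 (div_pos (by positivity) hu0).le
        _ = 2 * π / (u * x) := by rw [div_mul_div_comm, mul_one]
    have haux : 2 * L ≤ (x - 1) * (u * x) := by
      nlinarith [mul_nonneg (sub_nonneg.2 hεu) (mul_nonneg hx0 (show (0:ℝ) ≤ x - 1 by linarith)),
        mul_nonneg (show (0:ℝ) ≤ ε * x - 2 * ε - 2 * L by linarith)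
          (show (0:ℝ) ≤ x - 1 by linarith),
        mul_nonneg (show (0:ℝ) ≤ x - 4 by linarith) hL.le, hεpos.le]
    have hsmall : 2 * π / (u * x) ≤ π * (x - 1) / L := by
      rw [div_le_div_iff₀ (mul_pos hu0 hx0') hL]
      nlinarith [mul_le_mul_of_nonneg_left haux hπ.le]
    have hBhalf : 2 * π / (u * x) ≤ B / 2 := le_trans hsmall (by linarith)
    have habA := abs_le.1 ha
    have hAB : B / 2 ≤ A := by linarith
    have hBA : B ≤ 2 * A := by linarith
    have hAlow : π * (x - 1) / L ≤ A := le_trans (by linarith) hAB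
    -- (b)
    have hb : |B / A - 1| ≤ 4 * L / ε / n := by
      have h1 : B / A - 1 = (B - A) / A := by field_simp
      rw [h1, abs_div, abs_of_pos hApos, div_le_iff₀ hApos]
      have h2 : |B - A| ≤ 2 * π / (u * x) := by rw [abs_sub_comm]; exact ha
      refine le_trans h2 ?_
      refine le_trans ?_ (mul_le_mul_of_nonneg_left hAlow
        (le_of_lt (div_pos (div_pos (by positivity) hεpos) hn0')))
      rw [show 4 * L / ε / (n:ℝ) * (π * (x - 1) / L) = 4 * π * (x - 1) / (ε * n) by
        field_simp [hεpos.ne', hn0'.ne']]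
      rw [div_le_div_iff₀ (mul_pos hu0 hx0') (mul_pos hεpos hn0')]
      rw [← hxx]
      have c3 : ε * (x * x) ≤ 2 * ((x - 1) * (u * x)) := by
        nlinarith [mul_nonneg (sub_nonneg.2 hεu) (mul_self_nonneg x),
          mul_nonneg (mul_nonneg hu0.le hx0) (show (0:ℝ) ≤ x - 2 by linarith)]
      nlinarith [mul_le_mul_of_nonneg_left c3 hπ.le]
    -- (c)
    have hAlow2 : π * x / (2 * L) ≤ A := by
      refine le_trans ?_ hAlow
      rw [div_le_div_iff₀ (by linarith) hL]
      nlinarith [mul_nonneg (mul_nonneg hπ.le hL.le) (show (0:ℝ) ≤ x - 2 by linarith)]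
    have hc : (A ^ 2)⁻¹ ≤ 4 * L ^ 2 / π ^ 2 / n := by
      have h2 : (π * x / (2 * L)) ^ 2 ≤ A ^ 2 :=
        pow_le_pow_left₀ (le_of_lt (div_pos (mul_pos hπ hx0') (by linarith))) hAlow2 2
      have h3 := inv_anti₀
        (pow_pos (div_pos (mul_pos hπ hx0') (by linarith : (0:ℝ) < 2 * L)) 2) h2
      refine le_trans h3 ?_
      rw [show ((π * x / (2 * L)) ^ 2)⁻¹ = 4 * L ^ 2 / (π ^ 2 * (x * x)) by
        field_simp [hπ.ne', hx0'.ne', hL.ne']; ring]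
      rw [hxx, div_div]
    -- (d)
    have hid : A - B ^ 2 / A = (A - B) * ((A + B) / A) := by
      field_simp
      ring
    have hABA : (A + B) / A ≤ 3 := by rw [div_le_iff₀ hApos]; linarith
    have habs3 : |A - B ^ 2 / A| ≤ 2 * π / (u * x) * 3 := by
      rw [hid, abs_mul]
      exact mul_le_mul ha
        (by rw [abs_of_pos (div_pos (by linarith) hApos)]; exact hABA)
        (abs_nonneg _) (div_pos (by positivity) (mul_pos hu0 hx0')).le
    have hd1 : (A - B ^ 2 / A) ^ 2 ≤ (2 * π / (u * x) * 3) ^ 2 := by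
      rw [← sq_abs]; exact pow_le_pow_left₀ (abs_nonneg _) habs3 2
    have hd' : (u / L) * (A - B ^ 2 / A) ^ 2 ≤ 36 * π ^ 2 / (u * L) / n := by
      calc (u / L) * (A - B ^ 2 / A) ^ 2 ≤ (u / L) * (2 * π / (u * x) * 3) ^ 2 :=
            mul_le_mul_of_nonneg_left hd1 (div_pos hu0 hL).le
        _ = 36 * π ^ 2 / (u * L) / n := by
            rw [← hxx]; field_simp [hu0.ne', hL.ne', hx0'.ne', hπ.ne']; ring
    exact ⟨hp1, ha, hb, hc, hd'⟩
  refine ⟨N₀, ∑ j, 36 * π ^ 2 / (ℓ j * L), p, q, ?_, ?_, ?_, ?_, ?_, ?_⟩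
  · exact Finset.sum_pos (fun j _ => div_pos (by positivity) (mul_pos (hℓ j) hL))
      Finset.univ_nonempty
  · intro n hn
    obtain ⟨hql, hqu, _⟩ := hq n (le_trans (le_max_left _ _) hn)
    exact ⟨fun j => (main n hn j).1, hql, hqu⟩
  · exact fun n hn j => (main n hn j).2.1
  · intro j
    rw [tendsto_iff_dist_tendsto_zero]
    apply squeeze_zero' (.of_forall fun n => dist_nonneg) ?_
      (tendsto_const_div_atTop_nhds_zero_nat (4 * L / ε))
    filter_upwards [eventually_ge_atTop N₀] with n hn
    rw [Real.dist_eq]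
    exact (main n hn j).2.2.1
  · apply squeeze_zero' (.of_forall fun n => Finset.sum_nonneg fun j _ =>
      mul_nonneg (le_of_lt (div_pos (hℓ j) hL)) (by positivity)) ?_
      (tendsto_const_div_atTop_nhds_zero_nat (4 * L ^ 2 / π ^ 2))
    filter_upwards [eventually_ge_atTop N₀] with n hn
    calc ∑ j, (ℓ j / L) * ((2 * π * (p n j : ℝ) / ℓ j) ^ 2)⁻¹
        ≤ ∑ j, (ℓ j / L) * (4 * L ^ 2 / π ^ 2 / n) :=
          Finset.sum_le_sum fun j _ => mul_le_mul_of_nonneg_left (main n hn j).2.2.2.1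
            (le_of_lt (div_pos (hℓ j) hL))
      _ = (∑ j, ℓ j) / L * (4 * L ^ 2 / π ^ 2 / n) := by
          rw [← Finset.sum_mul, ← Finset.sum_div]
      _ = 4 * L ^ 2 / π ^ 2 / n := by rw [hsum, div_self hL.ne', one_mul]
  · intro n hn
    calc ∑ j, (ℓ j / L) * ((2 * π * (p n j : ℝ) / ℓ j)
            - (2 * π * (q n : ℝ) / L) ^ 2 / (2 * π * (p n j : ℝ) / ℓ j)) ^ 2
        ≤ ∑ j, 36 * π ^ 2 / (ℓ j * L) / n :=
          Finset.sum_le_sum fun j _ => (main n hn j).2.2.2.2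
      _ = (∑ j, 36 * π ^ 2 / (ℓ j * L)) / n := by rw [← Finset.sum_div]
end

section
/- Let (λ_n) be a sequence of positive reals with λ_n → +∞ and ℓ > 0 a badly approximable real. Suppose (p_n), (q_n) are sequences of integers with √λ_n = π p_n + o(1/√λ_n) and √λ_n = π q_n / ℓ + o(1/√λ_n). Then |p_n| → ∞, |q_n| → ∞, and |ℓ − q_n/p_n| = o(1/p_n²), contradicting bad approximability; hence no such sequences exist. -/
open Real Filter Topology

theorem sqrt_tendsto_atTop' : Tendsto Real.sqrt atTop atTop := by
  apply tendsto_atTop_atTop.2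
  intro b
  refine ⟨b ^ 2, fun a ha => ?_⟩
  calc b ≤ |b| := le_abs_self b
  _ = Real.sqrt (b ^ 2) := (Real.sqrt_sq_eq_abs b).symm
  _ ≤ Real.sqrt a := Real.sqrt_le_sqrt ha

/-- If ℓ > 0 is badly approximable, λ_n → +∞ with λ_n > 0, and sequences of integers
(p_n), (q_n) satisfy √λ_n = π p_n + o(1/√λ_n) and √λ_n = π q_n/ℓ + o(1/√λ_n)
(i.e. the deviations multiplied by √λ_n tend to 0), then a contradiction arises:
no such sequences exist. -/
theorem no_double_quasimode (ℓ : ℝ) (hℓ : 0 < ℓ)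
    (hbad : ∃ C > (0 : ℝ), ∀ (a : ℤ) (b : ℕ), 0 < b →
      C / (b : ℝ) ^ 2 ≤ |ℓ - (a : ℝ) / (b : ℝ)|)
    (lam : ℕ → ℝ) (hpos : ∀ n, 0 < lam n) (hlam : Tendsto lam atTop atTop)
    (p q : ℕ → ℤ)
    (hp : Tendsto (fun n => Real.sqrt (lam n) * (Real.sqrt (lam n) - π * (p n : ℝ)))
      atTop (𝓝 0))
    (hq : Tendsto (fun n => Real.sqrt (lam n) * (Real.sqrt (lam n) - π * (q n : ℝ) / ℓ))
      atTop (𝓝 0)) :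
    False := by
  obtain ⟨C, hC, hbad⟩ := hbad
  have hπ : (0:ℝ) < π := Real.pi_pos
  set s : ℕ → ℝ := fun n => Real.sqrt (lam n) with hsdef
  have hs_pos : ∀ n, 0 < s n := fun n => Real.sqrt_pos.2 (hpos n)
  have hs_top : Tendsto s atTop atTop := sqrt_tendsto_atTop'.comp hlam
  -- e n := s n - π p n → 0
  have he : Tendsto (fun n => s n - π * (p n : ℝ)) atTop (𝓝 0) := by
    have h := hp.div_atTop hs_top
    refine h.congr fun n => ?_
    exact mul_div_cancel_left₀ _ (hs_pos n).ne'
  -- π p n → ∞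
  have hptop : Tendsto (fun n => π * (p n : ℝ)) atTop atTop := by
    have h := (he.neg).add_atTop hs_top
    refine h.congr fun n => by ring
  -- s n (ℓ p n - q n) → 0
  have hT : Tendsto (fun n => s n * (ℓ * (p n : ℝ) - (q n : ℝ))) atTop (𝓝 0) := by
    have h := ((hq.sub hp).const_mul (ℓ / π))
    simp only [sub_self, mul_zero] at h
    refine h.congr fun n => ?_
    field_simp
    ring
  have hTabs : Tendsto (fun n => |s n * (ℓ * (p n : ℝ) - (q n : ℝ))|) atTop (𝓝 0) := by
    have := hT.abs
    simpa using this
  -- eventual facts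
  have hev1 : ∀ᶠ n in atTop, (1 : ℝ) ≤ (p n : ℝ) := by
    filter_upwards [hptop.eventually_ge_atTop π] with n hn
    exact (mul_le_mul_iff_right₀ hπ).mp (by simpa using hn)
  have hev2 : ∀ᶠ n in atTop, π * (p n : ℝ) ≤ 2 * s n := by
    have h1 : ∀ᶠ n in atTop, |s n - π * (p n : ℝ)| ≤ 1 := by
      have h := he.abs
      simp only [abs_zero] at h
      exact h.eventually (eventually_le_nhds one_pos)
    filter_upwards [h1, hs_top.eventually_ge_atTop 1] with n h1 h2
    have habs := le_abs_self (s n - π * (p n : ℝ))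
    have habs2 := neg_abs_le (s n - π * (p n : ℝ))
    nlinarith
  have hsmall : ∀ᶠ n in atTop, |s n * (ℓ * (p n : ℝ) - (q n : ℝ))| < C * (π / 2) := by
    refine hTabs.eventually (gt_mem_nhds ?_)
    positivity
  rcases (hev1.and (hev2.and hsmall)).exists with ⟨n, h1, h2, h3⟩
  -- bad approximability bound
  have hp0 : (0:ℝ) < (p n : ℝ) := lt_of_lt_of_le one_pos h1
  have hpz : 0 < p n := by exact_mod_cast hp0
  have hb : 0 < (p n).toNat := by omega
  have hcast : ((p n).toNat : ℝ) = (p n : ℝ) := by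
    exact_mod_cast Int.toNat_of_nonneg hpz.le
  have key := hbad (q n) (p n).toNat hb
  rw [hcast] at key
  have habs : |ℓ - (q n : ℝ) / (p n : ℝ)| = |ℓ * (p n : ℝ) - (q n : ℝ)| / (p n : ℝ) := by
    have h0 : ℓ - (q n : ℝ) / (p n : ℝ) = (ℓ * (p n : ℝ) - (q n : ℝ)) / (p n : ℝ) := by
      field_simp
    rw [h0, abs_div, abs_of_pos hp0]
  rw [habs] at key
  -- C / p ≤ |ℓ p - q|
  have key2 : C / (p n : ℝ) ≤ |ℓ * (p n : ℝ) - (q n : ℝ)| := by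
    rw [div_le_div_iff₀ (by positivity) hp0] at key
    rw [div_le_iff₀ hp0]
    nlinarith
  -- lower bound on s n * |...|
  have hsn := hs_pos n
  have hlow : C * (π / 2) ≤ s n * |ℓ * (p n : ℝ) - (q n : ℝ)| := by
    have h4 : C * (π / 2) ≤ s n * (C / (p n : ℝ)) := by
      have hrw : s n * (C / (p n : ℝ)) = s n * C / (p n : ℝ) :=
        (mul_div_assoc _ _ _).symm
      rw [hrw, le_div_iff₀ hp0]
      nlinarith
    exact h4.trans (mul_le_mul_of_nonneg_left key2 hsn.le)
  rw [abs_mul, abs_of_pos hsn] at h3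
  linarith
end

section
/- Let G be a finite connected graph with edge set E and ω an open subset meeting a subset E_ω of edges. The following are equivalent: (a) every cycle of G and every path connecting two exterior vertices meets ω; (b) the subgraph of uncontrolled edges E \ E_ω is a forest in which each connected component (tree) contains at most one exterior vertex of the original graph G. -/
/-!
The cycle clauses of (a) and (b) are contrapositives of each other. For the exterior-vertex
clauses, an uncontrolled walk between two exterior vertices has to be shortened to an
uncontrolled trail: whenever an edge is traversed twice, its two traversals share an endpoint,
and cutting out the closed subwalk between them leaves a strictly shorter walk with the same
ends and no new edges.
-/

/-- A finite graph (multigraph): finitely many edges, each with two (possibly equal)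
endpoint vertices. Loops and parallel edges are allowed. -/
structure MultiGraph where
  V : Type
  E : Type
  [fintV : Fintype V]
  [fintE : Fintype E]
  [decV : DecidableEq V]
  ends : E → V × V

attribute [instance] MultiGraph.fintV MultiGraph.fintE MultiGraph.decV

namespace MultiGraph

variable (G : MultiGraph)

/-- An edge is incident to a vertex if the vertex is one of its endpoints. -/
def Incident (e : G.E) (v : G.V) : Prop :=
  (G.ends e).1 = v ∨ (G.ends e).2 = v

/-- The degree of a vertex (a loop counts twice). -/
def degree (v : G.V) : ℕ :=
  ∑ e : G.E, ((if (G.ends e).1 = v then 1 else 0) + (if (G.ends e).2 = v then 1 else 0))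

/-- A vertex is exterior when it is attached to the graph by exactly one edge end. -/
def Exterior (v : G.V) : Prop := G.degree v = 1

/-- A vertex is interior when at least two edge ends are attached to it. -/
def Interior (v : G.V) : Prop := 2 ≤ G.degree v

/-- A walk along the edges of the graph: a sequence of n edges together with the
n+1 vertices visited, each edge joining two consecutive vertices. -/
structure Walk (G : MultiGraph) where
  n : ℕ
  vert : Fin (n + 1) → G.V
  edge : Fin n → G.E
  compat : ∀ i : Fin n,
    G.ends (edge i) = (vert i.castSucc, vert i.succ) ∨
    G.ends (edge i) = (vert i.succ, vert i.castSucc)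

namespace Walk

variable {G}

/-- Starting vertex of a walk. -/
def start (w : Walk G) : G.V := w.vert 0

/-- Final vertex of a walk. -/
def finish (w : Walk G) : G.V := w.vert (Fin.last w.n)

/-- A walk meets a set of edges if it traverses one of them. -/
def Meets (w : Walk G) (S : Set G.E) : Prop := ∃ i, w.edge i ∈ S

/-- All edges of the walk belong to the set `S`. -/
def EdgesIn (w : Walk G) (S : Set G.E) : Prop := ∀ i, w.edge i ∈ S

/-- A cycle: a closed walk of positive length traversing pairwise distinct edges. -/
def IsCycle (w : Walk G) : Prop :=
  1 ≤ w.n ∧ w.start = w.finish ∧ Function.Injective w.edge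

end Walk

/-- The graph is connected: any two vertices are joined by a walk. -/
def Connected : Prop := ∀ v v' : G.V, ∃ w : Walk G, w.start = v ∧ w.finish = v'

end MultiGraph

open MultiGraph

namespace MultiGraph.Walk

variable {G : MultiGraph}

lemma meets_iff_not_edgesIn_compl (w : Walk G) (S : Set G.E) : w.Meets S ↔ ¬ w.EdgesIn Sᶜ := by
  simp [Meets, EdgesIn]

lemma EdgesIn.mono {w w' : Walk G} {S : Set G.E} (h : w.EdgesIn S)
    (hw : Set.range w'.edge ⊆ Set.range w.edge) : w'.EdgesIn S := by
  intro i
  obtain ⟨j, hj⟩ := hw ⟨i, rfl⟩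
  exact hj ▸ h j

/-- The first traversal of a repeated edge starts where the second one starts or ends. -/
lemma exists_lt_vert_eq_of_not_injective (w : Walk G) (hw : ¬ Function.Injective w.edge) :
    ∃ a b : Fin (w.n + 1), a < b ∧ w.vert a = w.vert b := by
  obtain ⟨p, q, hpq, hlt⟩ : ∃ p q : Fin w.n, w.edge p = w.edge q ∧ p < q := by
    obtain ⟨i, j, hij, hne⟩ := Function.not_injective_iff.mp hw
    rcases hne.lt_or_gt with h | h
    exacts [⟨i, j, hij, h⟩, ⟨j, i, hij.symm, h⟩]
  have hlt' : p.castSucc < q.castSucc := Fin.castSucc_lt_castSucc_iff.2 hlt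
  have hlt'' : p.castSucc < q.succ := hlt'.trans Fin.castSucc_lt_succ
  rcases w.compat p with hp | hp <;> rcases w.compat q with hq | hq <;>
    rw [hpq, hq, Prod.mk.injEq] at hp
  exacts [⟨_, _, hlt', hp.1.symm⟩, ⟨_, _, hlt'', hp.1.symm⟩, ⟨_, _, hlt'', hp.2.symm⟩,
    ⟨_, _, hlt', hp.2.symm⟩]

/-- `w` with the closed subwalk between positions `a ≤ b` cut out; for `b < a` it is `w`. -/
def bypass (w : Walk G) (a b : Fin (w.n + 1)) (hv : w.vert a = w.vert b) : Walk G where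
  n := w.n - (b - a : ℕ)
  vert k := w.vert ⟨if (k : ℕ) < a then k else k + (b - a : ℕ), by split <;> omega⟩
  edge i := w.edge ⟨if (i : ℕ) < a then i else i + (b - a : ℕ), by split <;> omega⟩
  compat i := by
    -- the new walk jumps from position `a - 1` to `b` instead of `a`, which `hv` makes harmless
    have hnext : w.vert ⟨if (i : ℕ) + 1 < a then (i : ℕ) + 1 else i + 1 + (b - a : ℕ),
          by split <;> omega⟩
        = w.vert ⟨(if (i : ℕ) < a then (i : ℕ) else i + (b - a : ℕ)) + 1, by split <;> omega⟩ := by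
      by_cases h : (i : ℕ) + 1 = a ∧ (a : ℕ) ≤ b
      · calc _ = w.vert b := congrArg w.vert (Fin.ext (by simp only; split_ifs <;> omega))
          _ = w.vert a := hv.symm
          _ = _ := congrArg w.vert (Fin.ext (by simp only; split_ifs <;> omega))
      · congr 2; split_ifs <;> omega
    have := w.compat ⟨if (i : ℕ) < a then (i : ℕ) else i + (b - a : ℕ), by split <;> omega⟩
    simp only [Fin.castSucc_mk, Fin.succ_mk] at this
    simpa only [Fin.val_castSucc, Fin.val_succ, hnext] using this

section bypass

variable (w : Walk G) {a b : Fin (w.n + 1)} (hv : w.vert a = w.vert b)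

lemma bypass_n_lt (hab : a < b) : (w.bypass a b hv).n < w.n := by
  have := b.isLt
  simp only [bypass]; omega

lemma bypass_start : (w.bypass a b hv).start = w.start := by
  by_cases ha : (a : ℕ) = 0
  · calc _ = w.vert b := congrArg w.vert (Fin.ext (by simp [bypass, ha]))
      _ = w.vert a := hv.symm
      _ = _ := congrArg w.vert (Fin.ext ha)
  · exact congrArg w.vert (Fin.ext (by simp [bypass, Nat.pos_of_ne_zero ha]))

lemma bypass_finish : (w.bypass a b hv).finish = w.finish := by
  have := a.isLt
  have := b.isLt
  refine congrArg w.vert (Fin.ext ?_)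
  change (if w.n - (b - a : ℕ) < a then w.n - (b - a : ℕ) else w.n - (b - a : ℕ) + (b - a : ℕ))
    = w.n
  rw [if_neg (by omega)]
  omega

lemma range_bypass_edge_subset : Set.range (w.bypass a b hv).edge ⊆ Set.range w.edge :=
  Set.range_subset_iff.2 fun _ => ⟨_, rfl⟩

end bypass

lemma exists_injective_edge (w : Walk G) :
    ∃ w' : Walk G, Function.Injective w'.edge ∧ w'.start = w.start ∧ w'.finish = w.finish ∧
      Set.range w'.edge ⊆ Set.range w.edge := by
  obtain ⟨n, hn⟩ : ∃ n, w.n = n := ⟨_, rfl⟩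
  induction n using Nat.strong_induction_on generalizing w with
  | _ n ih =>
    by_cases hw : Function.Injective w.edge
    · exact ⟨w, hw, rfl, rfl, subset_rfl⟩
    obtain ⟨a, b, hab, hv⟩ := w.exists_lt_vert_eq_of_not_injective hw
    obtain ⟨w', hw', hs, hf, hr⟩ := ih _ (hn ▸ w.bypass_n_lt hv hab) (w.bypass a b hv) rfl
    exact ⟨w', hw', hs.trans (w.bypass_start hv), hf.trans (w.bypass_finish hv),
      hr.trans (w.range_bypass_edge_subset hv)⟩

end MultiGraph.Walk

theorem ggcc_iff_uncontrolled_forest_general (G : MultiGraph)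
    (Eω : Set G.E) :
    ((∀ w : Walk G, w.IsCycle → w.Meets Eω) ∧
      (∀ w : Walk G, Function.Injective w.edge →
        G.Exterior w.start → G.Exterior w.finish → w.start ≠ w.finish → w.Meets Eω))
    ↔
    ((∀ w : Walk G, w.EdgesIn Eωᶜ → ¬ w.IsCycle) ∧
      (∀ v v' : G.V, G.Exterior v → G.Exterior v' → v ≠ v' →
        ¬ ∃ w : Walk G, w.EdgesIn Eωᶜ ∧ w.start = v ∧ w.finish = v')) := by
  simp only [Walk.meets_iff_not_edgesIn_compl]
  refine and_congr ⟨fun h w hw hc => h w hc hw, fun h w hc hw => h w hw hc⟩ ⟨?_, ?_⟩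
  · rintro h v v' hv hv' hne ⟨w, hw, rfl, rfl⟩
    obtain ⟨t, ht, hs, hf, hr⟩ := w.exists_injective_edge
    exact h t ht (hs ▸ hv) (hf ▸ hv') (hs ▸ hf ▸ hne) (hw.mono hr)
  · exact fun h w _ hv hv' hne hw => h _ _ hv hv' hne ⟨w, hw, rfl, rfl⟩

/-- Combinatorial equivalence in the characterization of (GGCC): for a finite
connected graph `G` with controlled edge set `Eω`, the following are equivalent:
(a) every cycle of `G`, and every path connecting two distinct exterior vertices,
contains a controlled edge;
(b) the subgraph of uncontrolled edges contains no cycle (it is a forest) and no two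
distinct exterior vertices of `G` are connected through uncontrolled edges (each tree
of the forest contains at most one exterior vertex of `G`). -/
theorem ggcc_iff_uncontrolled_forest (G : MultiGraph) (hconn : G.Connected)
    (Eω : Set G.E) :
    ((∀ w : Walk G, w.IsCycle → w.Meets Eω) ∧
      (∀ w : Walk G, Function.Injective w.edge →
        G.Exterior w.start → G.Exterior w.finish → w.start ≠ w.finish → w.Meets Eω))
    ↔
    ((∀ w : Walk G, w.EdgesIn Eωᶜ → ¬ w.IsCycle) ∧
      (∀ v v' : G.V, G.Exterior v → G.Exterior v' → v ≠ v' →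
        ¬ ∃ w : Walk G, w.EdgesIn Eωᶜ ∧ w.start = v ∧ w.finish = v')) :=
  ggcc_iff_uncontrolled_forest_general G Eω
end

section
/- Let G be a finite connected graph. If the set of uncontrolled edges E \ E_ω is a forest whose trees each contain at most one exterior vertex of G, then there exists an injective function u from E \ E_ω into the set of interior vertices of G such that for every uncontrolled edge e, u(e) is one of the two incident vertices of e. -/
open MultiGraph

section Helpers

variable {G : MultiGraph} {Eω : Set G.E}

/-- one-edge walk from an edge -/
def oneWalk (G : MultiGraph) (e : G.E) : Walk G where
  n := 1
  vert := fun i => if i = 0 then (G.ends e).1 else (G.ends e).2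
  edge := fun _ => e
  compat := by
    intro i
    left
    have : i = 0 := Subsingleton.elim _ _
    subst this
    simp [Fin.ext_iff]

lemma no_loop (hforest : ∀ w : Walk G, w.EdgesIn Eωᶜ → ¬ w.IsCycle)
    {e : G.E} (he : e ∉ Eω) : (G.ends e).1 ≠ (G.ends e).2 := by
  intro h
  apply hforest (oneWalk G e)
  · intro i; simpa [oneWalk] using he
  · refine ⟨le_refl _, ?_, ?_⟩
    · show (if (0 : Fin 2) = 0 then (G.ends e).1 else (G.ends e).2) =
        (if (Fin.last 1 : Fin 2) = 0 then (G.ends e).1 else (G.ends e).2)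
      rw [if_pos rfl, if_neg (by decide)]; exact h
    · intro i j _; have h1 : (oneWalk G e).n = 1 := rfl; ext; omega

lemma edge_inj (w : Walk G) (h : Function.Injective w.vert) :
    Function.Injective w.edge := by
  intro i j hij
  rcases w.compat i with hi | hi <;> rcases w.compat j with hj | hj <;>
    rw [hij, hj] at hi <;>
    [skip; skip; skip; skip] <;>
  · have h1 := congrArg Prod.fst hi
    have h2 := congrArg Prod.snd hi
    simp only at h1 h2
    have h1 := h h1
    have h2 := h h2
    simp [Fin.ext_iff] at h1 h2 ⊢
    omega

end Helpers

section Helpers2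

variable {G : MultiGraph} {Eω : Set G.E}

lemma rev_aux1 {n : ℕ} (i : Fin n) : (i.rev).castSucc = (i.succ).rev := by
  ext; simp [Fin.rev]

lemma rev_aux2 {n : ℕ} (i : Fin n) : (i.rev).succ = (i.castSucc).rev := by
  ext; simp [Fin.rev]; omega

/-- Reversal of a walk. -/
def MultiGraph.Walk.rev {G : MultiGraph} (w : Walk G) : Walk G where
  n := w.n
  vert := fun i => w.vert i.rev
  edge := fun i => w.edge i.rev
  compat := by
    intro i
    rcases w.compat i.rev with h | h
    · right; rw [h, rev_aux1, rev_aux2]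
    · left; rw [h, rev_aux1, rev_aux2]

lemma snoc_inj {n : ℕ} {α : Type*} {f : Fin (n+1) → α} {a : α}
    (hf : Function.Injective f) (ha : a ∉ Set.range f) :
    Function.Injective (Fin.snoc f a : Fin (n+2) → α) := by
  intro i j h
  rcases i.eq_castSucc_or_eq_last with ⟨i', rfl⟩ | rfl <;>
    rcases j.eq_castSucc_or_eq_last with ⟨j', rfl⟩ | rfl
  · simp only [Fin.snoc_castSucc] at h
    exact congrArg _ (hf h)
  · simp only [Fin.snoc_castSucc, Fin.snoc_last] at h
    exact absurd ⟨i', h⟩ ha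
  · simp only [Fin.snoc_castSucc, Fin.snoc_last] at h
    exact absurd ⟨j', h.symm⟩ ha
  · rfl

/-- Extension of a walk by one more edge at the end. -/
def extWalk (w : Walk G) (e' : G.E) (v'' : G.V)
    (h : G.ends e' = (w.finish, v'') ∨ G.ends e' = (v'', w.finish)) : Walk G where
  n := w.n + 1
  vert := Fin.snoc w.vert v''
  edge := Fin.snoc w.edge e'
  compat := by
    intro i
    rcases i.eq_castSucc_or_eq_last with ⟨j, rfl⟩ | rfl
    · simp only [Fin.snoc_castSucc, Fin.succ_castSucc]; exact w.compat j
    · simpa [Fin.succ_last, Walk.finish] using h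

end Helpers2

section Helpers3

variable {G : MultiGraph} {Eω : Set G.E}

/-- Cycle formed by the tail of a walk plus an edge joining the finish back to
an intermediate vertex. -/
def cycWalk (w : Walk G) (j : Fin (w.n + 1)) (hj : j.val < w.n) (e' : G.E)
    (h : G.ends e' = (w.finish, w.vert j) ∨ G.ends e' = (w.vert j, w.finish)) : Walk G where
  n := (w.n - j.val) + 1
  vert := fun i => if h2 : i.val ≤ w.n - j.val then w.vert ⟨j.val + i.val, by omega⟩ else w.vert j
  edge := fun i => if h2 : i.val < w.n - j.val then w.edge ⟨j.val + i.val, by omega⟩ else e'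
  compat := by
    intro i
    beta_reduce
    have hi : i.val < w.n - j.val + 1 := i.isLt
    have hc : (i.castSucc).val = i.val := rfl
    have hs : (i.succ).val = i.val + 1 := rfl
    by_cases h2 : i.val < w.n - j.val
    · rw [dif_pos h2, dif_pos (by omega : (i.castSucc).val ≤ w.n - j.val),
        dif_pos (by omega : (i.succ).val ≤ w.n - j.val)]
      have := w.compat ⟨j.val + i.val, by omega⟩
      simp only [Fin.castSucc_mk, Fin.succ_mk] at this
      rcases this with h3 | h3
      · left; rw [h3]; congr 2
      · right; rw [h3]; congr 2
    · have h2' : i.val = w.n - j.val := by omega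
      rw [dif_neg h2, dif_pos (by omega : (i.castSucc).val ≤ w.n - j.val),
        dif_neg (by omega : ¬ (i.succ).val ≤ w.n - j.val)]
      have hv : w.vert ⟨j.val + (i.castSucc).val, by omega⟩ = w.finish := by
        unfold Walk.finish; congr 1; ext; simp [hc, h2']; omega
      rw [hv]
      tauto

end Helpers3

section Helpers3b

variable {G : MultiGraph} {Eω : Set G.E}

lemma cycWalk_n (w : Walk G) (j : Fin (w.n + 1)) (hj : j.val < w.n) (e' : G.E)
    (h : G.ends e' = (w.finish, w.vert j) ∨ G.ends e' = (w.vert j, w.finish)) :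
    (cycWalk w j hj e' h).n = (w.n - j.val) + 1 := rfl

lemma cycWalk_edge (w : Walk G) (j : Fin (w.n + 1)) (hj : j.val < w.n) (e' : G.E)
    (h : G.ends e' = (w.finish, w.vert j) ∨ G.ends e' = (w.vert j, w.finish))
    (i : Fin ((cycWalk w j hj e' h).n)) :
    (cycWalk w j hj e' h).edge i =
      if h2 : i.val < w.n - j.val then w.edge ⟨j.val + i.val, by omega⟩ else e' := rfl

lemma cycWalk_vert (w : Walk G) (j : Fin (w.n + 1)) (hj : j.val < w.n) (e' : G.E)
    (h : G.ends e' = (w.finish, w.vert j) ∨ G.ends e' = (w.vert j, w.finish))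
    (i : Fin ((cycWalk w j hj e' h).n + 1)) :
    (cycWalk w j hj e' h).vert i =
      if h2 : i.val ≤ w.n - j.val then w.vert ⟨j.val + i.val, by omega⟩ else w.vert j := rfl

end Helpers3b

section Helpers4

variable {G : MultiGraph} {Eω : Set G.E}

lemma finish_leaf (hforest : ∀ w : Walk G, w.EdgesIn Eωᶜ → ¬ w.IsCycle)
    (w : Walk G) (hw1 : 1 ≤ w.n) (hwF : w.EdgesIn Eωᶜ)
    (hinj : Function.Injective w.vert)
    (hmax : ∀ w' : Walk G, w'.EdgesIn Eωᶜ → Function.Injective w'.vert → w'.n ≤ w.n) :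
    ∀ e', e' ∉ Eω → G.Incident e' w.finish → e' = w.edge ⟨w.n - 1, by omega⟩ := by
  intro e' he' hinc
  by_contra hne
  set v := w.finish with hv
  obtain ⟨v'', horient⟩ : ∃ v'', G.ends e' = (v, v'') ∨ G.ends e' = (v'', v) := by
    rcases hinc with h | h
    · exact ⟨(G.ends e').2, Or.inl (by rw [← h])⟩
    · exact ⟨(G.ends e').1, Or.inr (by rw [← h])⟩
  have hvv : v'' ≠ v := by
    intro h
    subst h
    have := no_loop hforest he'
    rcases horient with h | h <;> rw [h] at this <;> exact this rfl
  by_cases hr : ∃ j, w.vert j = v''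
  · -- cycle case
    obtain ⟨j, hj⟩ := hr
    have hjlt : j.val < w.n := by
      rcases lt_or_eq_of_le (Nat.lt_succ_iff.mp j.isLt) with h | h
      · exact h
      · exfalso
        apply hvv
        rw [← hj]
        have : j = Fin.last w.n := by ext; exact h
        rw [this]; rfl
    have horient' : G.ends e' = (w.finish, w.vert j) ∨ G.ends e' = (w.vert j, w.finish) := by
      rw [hj, ← hv]; exact horient
    refine hforest (cycWalk w j hjlt e' horient') ?_ ?_
    · intro i
      rw [cycWalk_edge]
      by_cases h2 : i.val < w.n - j.val
      · rw [dif_pos h2]; exact hwF _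
      · rw [dif_neg h2]; exact he'
    · refine ⟨?_, ?_, ?_⟩
      · rw [cycWalk_n]; omega
      · show (cycWalk w j hjlt e' horient').vert 0 =
          (cycWalk w j hjlt e' horient').vert (Fin.last _)
        rw [cycWalk_vert, cycWalk_vert]
        have h0 : (0 : Fin ((cycWalk w j hjlt e' horient').n + 1)).val = 0 := rfl
        have hl : (Fin.last ((cycWalk w j hjlt e' horient').n)).val = w.n - j.val + 1 := rfl
        rw [dif_pos (by omega), dif_neg (by omega)]
        congr 1
      · intro i₁ i₂ h12
        have hn : (cycWalk w j hjlt e' horient').n = w.n - j.val + 1 := rfl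
        have hi₁ : i₁.val < w.n - j.val + 1 := by have := i₁.isLt; omega
        have hi₂ : i₂.val < w.n - j.val + 1 := by have := i₂.isLt; omega
        rw [cycWalk_edge, cycWalk_edge] at h12
        by_cases c₁ : i₁.val < w.n - j.val <;> by_cases c₂ : i₂.val < w.n - j.val
        · rw [dif_pos c₁, dif_pos c₂] at h12
          have := edge_inj w hinj h12
          have := congrArg Fin.val this
          simp only at this
          ext; omega
        · exfalso
          rw [dif_pos c₁, dif_neg c₂] at h12
          set k : ℕ := j.val + i₁.val with hk
          have hkn : k < w.n := by omega
          by_cases hk1 : k = w.n - 1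
          · apply hne
            rw [← h12]
            congr 1
            ext; simp [← hk, hk1]
          · have hcom := w.compat ⟨k, hkn⟩
            simp only [Fin.castSucc_mk, Fin.succ_mk] at hcom
            rw [h12] at hcom
            have hne1 : (⟨k, by omega⟩ : Fin (w.n+1)) ≠ Fin.last w.n := by
              intro h; have := congrArg Fin.val h; simp [Fin.last] at this; omega
            have hne2 : (⟨k+1, by omega⟩ : Fin (w.n+1)) ≠ Fin.last w.n := by
              intro h; have := congrArg Fin.val h; simp [Fin.last] at this; omega
            have hv1 : w.vert ⟨k, by omega⟩ ≠ v := fun h => hne1 (hinj h)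
            have hv2 : w.vert ⟨k+1, by omega⟩ ≠ v := fun h => hne2 (hinj h)
            rcases horient with h | h <;> rcases hcom with h' | h' <;>
              rw [h] at h' <;>
              [exact hv1 (congrArg Prod.fst h').symm;
               exact hv2 (congrArg Prod.fst h').symm;
               exact hv2 (congrArg Prod.snd h').symm;
               exact hv1 (congrArg Prod.snd h').symm]
        · exfalso
          rw [dif_neg c₁, dif_pos c₂] at h12
          set k : ℕ := j.val + i₂.val with hk
          have hkn : k < w.n := by omega
          by_cases hk1 : k = w.n - 1
          · apply hne
            rw [h12]
            congr 1
            ext; simp [← hk, hk1]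
          · have hcom := w.compat ⟨k, hkn⟩
            simp only [Fin.castSucc_mk, Fin.succ_mk] at hcom
            rw [← h12] at hcom
            have hne1 : (⟨k, by omega⟩ : Fin (w.n+1)) ≠ Fin.last w.n := by
              intro h; have := congrArg Fin.val h; simp [Fin.last] at this; omega
            have hne2 : (⟨k+1, by omega⟩ : Fin (w.n+1)) ≠ Fin.last w.n := by
              intro h; have := congrArg Fin.val h; simp [Fin.last] at this; omega
            have hv1 : w.vert ⟨k, by omega⟩ ≠ v := fun h => hne1 (hinj h)
            have hv2 : w.vert ⟨k+1, by omega⟩ ≠ v := fun h => hne2 (hinj h)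
            rcases horient with h | h <;> rcases hcom with h' | h' <;>
              rw [h] at h' <;>
              [exact hv1 (congrArg Prod.fst h').symm;
               exact hv2 (congrArg Prod.fst h').symm;
               exact hv2 (congrArg Prod.snd h').symm;
               exact hv1 (congrArg Prod.snd h').symm]
        · ext; omega
  · -- extension case
    push_neg at hr
    have horient'' : G.ends e' = (w.finish, v'') ∨ G.ends e' = (v'', w.finish) := by
      rw [← hv]; exact horient
    have hF : (extWalk w e' v'' horient'').EdgesIn Eωᶜ := by
      intro i
      rcases i.eq_castSucc_or_eq_last with ⟨i', rfl⟩ | rfl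
      · show (Fin.snoc w.edge e' : Fin (w.n+1) → G.E) i'.castSucc ∈ Eωᶜ
        rw [Fin.snoc_castSucc]
        exact hwF i'
      · show (Fin.snoc w.edge e' : Fin (w.n+1) → G.E) (Fin.last w.n) ∈ Eωᶜ
        rw [Fin.snoc_last]
        exact he'
    have hInj : Function.Injective (extWalk w e' v'' horient'').vert :=
      snoc_inj hinj (fun ⟨j, hj⟩ => hr j hj)
    have := hmax _ hF hInj
    have hn : (extWalk w e' v'' horient'').n = w.n + 1 := rfl
    omega

end Helpers4

section Helpers5

variable {G : MultiGraph} {Eω : Set G.E}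

lemma one_le_degree {e : G.E} {v : G.V} (h : G.Incident e v) : 1 ≤ G.degree v := by
  unfold MultiGraph.degree
  have h1 : 1 ≤ (if (G.ends e).1 = v then 1 else 0) + (if (G.ends e).2 = v then 1 else 0) := by
    rcases h with h | h <;> simp [h]
  exact le_trans h1 (Finset.single_le_sum
    (f := fun e' => (if (G.ends e').1 = v then 1 else 0) + (if (G.ends e').2 = v then 1 else 0))
    (fun _ _ => Nat.zero_le _) (Finset.mem_univ e))

lemma finish_incident (w : Walk G) (hw1 : 1 ≤ w.n) :
    G.Incident (w.edge ⟨w.n - 1, by omega⟩) w.finish := by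
  have hcom := w.compat ⟨w.n - 1, by omega⟩
  have hsucc : (⟨w.n - 1, by omega⟩ : Fin w.n).succ = Fin.last w.n := by
    ext; simp [Fin.last]; omega
  rw [hsucc] at hcom
  unfold MultiGraph.Incident Walk.finish
  rcases hcom with h | h <;> rw [h]
  · right; rfl
  · left; rfl

lemma exists_leaf (hforest : ∀ w : Walk G, w.EdgesIn Eωᶜ → ¬ w.IsCycle)
    (hext : ∀ v v' : G.V, G.Exterior v → G.Exterior v' → v ≠ v' →
      ¬ ∃ w : Walk G, w.EdgesIn Eωᶜ ∧ w.start = v ∧ w.finish = v')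
    {e0 : G.E} (he0 : e0 ∉ Eω) :
    ∃ e v, e ∉ Eω ∧ G.Incident e v ∧ G.Interior v ∧
      ∀ e', e' ∉ Eω → G.Incident e' v → e' = e := by
  classical
  have hloop := no_loop hforest he0
  have hw0inj : Function.Injective (oneWalk G e0).vert := by
    intro i j hij
    have hi2 : i.val < 2 := i.isLt
    have hj2 : j.val < 2 := j.isLt
    by_cases hi : i = 0 <;> by_cases hj : j = 0
    · rw [hi, hj]
    · exfalso; unfold oneWalk at hij; simp only [hi, hj, if_pos, if_neg, if_true] at hij
      exact hloop ((if_pos (rfl : (0 : Fin (1+1)) = 0)).symm.trans (hij.trans (if_neg (show ¬ (j : Fin (1+1)) = 0 from hj))))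
    · exfalso; unfold oneWalk at hij; simp only [hi, hj, if_pos, if_neg, if_true] at hij
      exact hloop ((if_pos (rfl : (0 : Fin (1+1)) = 0)).symm.trans (hij.symm.trans (if_neg (show ¬ (i : Fin (1+1)) = 0 from hi))))
    · have hi' : i.val ≠ 0 := fun h => hi (by ext; exact h)
      have hj' : j.val ≠ 0 := fun h => hj (by ext; exact h)
      ext; omega
  set P : ℕ → Prop := fun k => ∃ w : Walk G, w.EdgesIn Eωᶜ ∧ Function.Injective w.vert ∧ w.n = k
    with hP
  have hP1 : P 1 := ⟨oneWalk G e0, fun _ => he0, hw0inj, rfl⟩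
  set N := Fintype.card G.V with hN
  have hbound : ∀ k, P k → k ≤ N := by
    rintro k ⟨w, _, hinj, hk⟩
    have := Fintype.card_le_of_injective _ hinj
    simp only [Fintype.card_fin] at this
    omega
  have h1N : 1 ≤ N := hbound 1 hP1
  obtain ⟨w, hwF, hinj, hwn⟩ : P (Nat.findGreatest P N) := Nat.findGreatest_spec h1N hP1
  have hw1 : 1 ≤ w.n := by rw [hwn]; exact Nat.le_findGreatest h1N hP1
  have hmax : ∀ w' : Walk G, w'.EdgesIn Eωᶜ → Function.Injective w'.vert → w'.n ≤ w.n := by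
    intro w' hF hI
    rw [hwn]
    exact Nat.le_findGreatest (hbound _ ⟨w', hF, hI, rfl⟩) ⟨w', hF, hI, rfl⟩
  have hleaf2 := finish_leaf hforest w hw1 hwF hinj hmax
  have hrevF : w.rev.EdgesIn Eωᶜ := fun i => hwF _
  have hrevinj : Function.Injective w.rev.vert := fun i j h => Fin.rev_injective (hinj h)
  have hleaf1 := finish_leaf hforest w.rev hw1 hrevF hrevinj (fun w' a b => hmax w' a b)
  have hfs : w.rev.finish = w.start := by
    show w.vert (Fin.last w.n).rev = w.vert 0
    rw [Fin.rev_last]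
  have hne12 : w.start ≠ w.finish := by
    intro h
    have := congrArg Fin.val (hinj h)
    simp [Fin.last] at this
    omega
  have hnotboth : ¬ (G.Exterior w.start ∧ G.Exterior w.finish) := by
    rintro ⟨h1, h2⟩
    exact hext _ _ h1 h2 hne12 ⟨w, hwF, rfl, rfl⟩
  by_cases hx : G.Exterior w.finish
  · -- use the start vertex
    have hxs : ¬ G.Exterior w.start := fun h => hnotboth ⟨h, hx⟩
    have hincs : G.Incident (w.rev.edge ⟨w.rev.n - 1, by show w.n - 1 < w.n; omega⟩) w.start := by
      rw [← hfs]; exact finish_incident w.rev hw1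
    refine ⟨w.rev.edge ⟨w.rev.n - 1, by show w.n - 1 < w.n; omega⟩, w.start, hrevF _, hincs, ?_, ?_⟩
    · have h1 := one_le_degree hincs
      unfold MultiGraph.Interior
      unfold MultiGraph.Exterior at hxs
      omega
    · intro e' he' hincv
      rw [← hfs] at hincv
      exact hleaf1 e' he' hincv
  · have hincs : G.Incident (w.edge ⟨w.n - 1, by omega⟩) w.finish := finish_incident w hw1
    refine ⟨w.edge ⟨w.n - 1, by omega⟩, w.finish, hwF _, hincs, ?_, ?_⟩
    · have h1 := one_le_degree hincs
      unfold MultiGraph.Interior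
      unfold MultiGraph.Exterior at hx
      omega
    · intro e' he' hincv
      exact hleaf2 e' he' hincv

end Helpers5

/-- If the uncontrolled edges of a finite connected graph form a forest whose trees
each contain at most one exterior vertex of `G`, then there is an injection from the
uncontrolled edges into the interior vertices assigning to each uncontrolled edge one
of its incident vertices (the Apraiz–Bárcena-Petisco condition). -/
theorem forest_implies_abp_injection (G : MultiGraph) (hconn : G.Connected)
    (Eω : Set G.E)
    (hforest : ∀ w : Walk G, w.EdgesIn Eωᶜ → ¬ w.IsCycle)
    (hext : ∀ v v' : G.V, G.Exterior v → G.Exterior v' → v ≠ v' →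
      ¬ ∃ w : Walk G, w.EdgesIn Eωᶜ ∧ w.start = v ∧ w.finish = v') :
    ∃ u : {e : G.E // e ∉ Eω} → {v : G.V // G.Interior v},
      Function.Injective u ∧ ∀ e, G.Incident e.1 (u e).1 := by
  classical
  suffices H : ∀ (n : ℕ) (S : Set G.E), Sᶜ.ncard ≤ n →
      (∀ w : Walk G, w.EdgesIn Sᶜ → ¬ w.IsCycle) →
      (∀ v v' : G.V, G.Exterior v → G.Exterior v' → v ≠ v' →
        ¬ ∃ w : Walk G, w.EdgesIn Sᶜ ∧ w.start = v ∧ w.finish = v') →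
      ∃ u : {e : G.E // e ∉ S} → {v : G.V // G.Interior v},
        Function.Injective u ∧ ∀ e, G.Incident e.1 (u e).1 by
    exact H _ Eω le_rfl hforest hext
  intro n
  induction n with
  | zero =>
    intro S hcard hf hx
    have hempty : Sᶜ = ∅ := (Set.ncard_eq_zero (Set.toFinite _)).mp (Nat.le_zero.mp hcard)
    have hall : ∀ x : {e : G.E // e ∉ S}, False := fun x =>
      Set.eq_empty_iff_forall_notMem.mp hempty x.1 x.2
    exact ⟨fun x => (hall x).elim, fun a b _ => (hall a).elim, fun x => (hall x).elim⟩
  | succ n ih =>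
    intro S hcard hf hx
    by_cases hne : ∃ e0, e0 ∉ S
    · obtain ⟨e0, he0⟩ := hne
      obtain ⟨e, v, heF, hinc, hint, hleaf⟩ := exists_leaf hf hx he0
      have hsub : (insert e S)ᶜ ⊆ Sᶜ := Set.compl_subset_compl.mpr (Set.subset_insert _ _)
      have hcard' : (insert e S)ᶜ.ncard ≤ n := by
        have hcompl : (insert e S)ᶜ = Sᶜ \ {e} := by
          ext x; simp [Set.mem_insert_iff]; tauto
        rw [hcompl]
        have hlt := Set.ncard_diff_singleton_lt_of_mem (show e ∈ Sᶜ from heF) (Set.toFinite _)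
        omega
      have hf' : ∀ w : Walk G, w.EdgesIn (insert e S)ᶜ → ¬ w.IsCycle :=
        fun w hw => hf w (fun i => hsub (hw i))
      have hx' : ∀ v v' : G.V, G.Exterior v → G.Exterior v' → v ≠ v' →
          ¬ ∃ w : Walk G, w.EdgesIn (insert e S)ᶜ ∧ w.start = v ∧ w.finish = v' := by
        rintro a b h1 h2 h3 ⟨w, hwF, hs, hfi⟩
        exact hx a b h1 h2 h3 ⟨w, fun i => hsub (hwF i), hs, hfi⟩
      obtain ⟨u', hu'inj, hu'inc⟩ := ih (insert e S) hcard' hf' hx'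
      have hmem : ∀ x : {e' : G.E // e' ∉ S}, x.1 ≠ e → x.1 ∉ insert e S :=
        fun x h hin => (Set.mem_insert_iff.mp hin).elim h x.2
      refine ⟨fun x => if hxe : x.1 = e then ⟨v, hint⟩ else u' ⟨x.1, hmem x hxe⟩, ?_, ?_⟩
      · intro a b hab
        by_cases ha : a.1 = e <;> by_cases hb : b.1 = e
        · exact Subtype.ext (ha.trans hb.symm)
        · exfalso
          simp only [dif_pos ha, dif_neg hb] at hab
          have hbv : (u' ⟨b.1, hmem b hb⟩).1 = v := (congrArg Subtype.val hab).symm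
          have : G.Incident b.1 v := hbv ▸ hu'inc ⟨b.1, hmem b hb⟩
          exact hb (hleaf b.1 b.2 this)
        · exfalso
          simp only [dif_pos hb, dif_neg ha] at hab
          have hav : (u' ⟨a.1, hmem a ha⟩).1 = v := congrArg Subtype.val hab
          have : G.Incident a.1 v := hav ▸ hu'inc ⟨a.1, hmem a ha⟩
          exact ha (hleaf a.1 a.2 this)
        · simp only [dif_neg ha, dif_neg hb] at hab
          have h2 := congrArg Subtype.val (hu'inj hab)
          exact Subtype.ext h2
      · intro x
        by_cases hxe : x.1 = e
        · simp only [dif_pos hxe]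
          rw [hxe]
          exact hinc
        · simp only [dif_neg hxe]
          exact hu'inc ⟨x.1, hmem x hxe⟩
    · push_neg at hne
      exact ⟨fun x => (x.2 (hne x.1)).elim, fun a b _ => (a.2 (hne a.1)).elim,
        fun x => (x.2 (hne x.1)).elim⟩
end

section
/- Let G be a finite connected graph and suppose there exists an injective map u from the set of uncontrolled edges into the interior vertices of G assigning to each uncontrolled edge one of its incident vertices, and suppose the uncontrolled edge set contains no cycle. Then there is no path of uncontrolled edges connecting two distinct exterior vertices of G. -/
/-!
The edges of the path are pairwise distinct, so the ABP assignment sends them injectively to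
interior vertices of the path. A path with `n` edges visits at most `n + 1` vertices, and its two
distinct exterior endpoints are not interior, so at most `n - 1` of its vertices are interior:
too few to receive `n` edges injectively.
-/

open Finset

namespace MultiGraph

variable {G : MultiGraph}

instance (v : G.V) : Decidable (G.Interior v) := inferInstanceAs (Decidable (2 ≤ G.degree v))

theorem Exterior.not_interior {v : G.V} (hv : G.Exterior v) : ¬ G.Interior v := by
  unfold Exterior at hv
  unfold Interior
  omega

namespace Walk

theorem mem_image_vert_of_incident (w : Walk G) {i : Fin w.n} {v : G.V}
    (hv : G.Incident (w.edge i) v) : v ∈ univ.image w.vert := by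
  simp only [mem_image, mem_univ, true_and]
  rcases w.compat i with hc | hc <;> rw [Incident, hc] at hv <;> rcases hv with hv | hv <;>
    exact ⟨_, hv⟩

theorem card_interior_add_two_le (w : Walk G) (hs : ¬ G.Interior w.start)
    (hf : ¬ G.Interior w.finish) (hne : w.start ≠ w.finish) :
    #((univ.image w.vert).filter G.Interior) + 2 ≤ w.n + 1 := by
  have hends : {w.start, w.finish} ⊆ univ.image w.vert := by
    simp only [insert_subset_iff, singleton_subset_iff, mem_image, mem_univ, true_and]
    exact ⟨⟨_, rfl⟩, ⟨_, rfl⟩⟩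
  have hsub : (univ.image w.vert).filter G.Interior ⊆ univ.image w.vert \ {w.start, w.finish} := by
    intro v hv
    rw [mem_filter] at hv
    simp only [mem_sdiff, mem_insert, mem_singleton]
    exact ⟨hv.1, by rintro (rfl | rfl) <;> tauto⟩
  calc #((univ.image w.vert).filter G.Interior) + 2
      ≤ #(univ.image w.vert \ {w.start, w.finish}) + #{w.start, w.finish} := by
        rw [card_pair hne]; gcongr
    _ = #(univ.image w.vert) := card_sdiff_add_card_eq_card hends
    _ ≤ w.n + 1 := card_image_le.trans_eq (by simp)

theorem length_le_card_interior (w : Walk G) (f : Fin w.n → G.V) (hf : Function.Injective f)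
    (hinc : ∀ i, G.Incident (w.edge i) (f i)) (hint : ∀ i, G.Interior (f i)) :
    w.n ≤ #((univ.image w.vert).filter G.Interior) := by
  simpa using card_le_card_of_injOn (s := univ) f
    (fun i _ => mem_filter.2 ⟨w.mem_image_vert_of_incident (hinc i), hint i⟩) hf.injOn

end Walk

end MultiGraph

open MultiGraph

theorem abp_implies_no_exterior_path_general (G : MultiGraph)
    (Eω : Set G.E)
    (u : {e : G.E // e ∉ Eω} → {v : G.V // G.Interior v})
    (hinj : Function.Injective u) (hinc : ∀ e, G.Incident e.1 (u e).1) :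
    ¬ ∃ w : Walk G, w.EdgesIn Eωᶜ ∧ Function.Injective w.edge ∧
      G.Exterior w.start ∧ G.Exterior w.finish ∧ w.start ≠ w.finish := by
  rintro ⟨w, hedges, hedge_inj, hs, hf, hne⟩
  let f : Fin w.n → G.V := fun i => (u ⟨w.edge i, hedges i⟩).1
  have hf_inj : Function.Injective f := fun i j hij =>
    hedge_inj (congrArg Subtype.val (hinj (Subtype.ext hij)))
  have hlen := w.length_le_card_interior f hf_inj (fun i => hinc ⟨w.edge i, hedges i⟩)
    (fun i => (u _).2)
  have hcard := w.card_interior_add_two_le hs.not_interior hf.not_interior hne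
  omega

/-- If the uncontrolled edges contain no cycle and there is an injective assignment of
each uncontrolled edge to one of its incident interior vertices (the ABP condition),
then no path of uncontrolled edges connects two distinct exterior vertices of `G`. -/
theorem abp_implies_no_exterior_path (G : MultiGraph) (hconn : G.Connected)
    (Eω : Set G.E)
    (hforest : ∀ w : Walk G, w.EdgesIn Eωᶜ → ¬ w.IsCycle)
    (u : {e : G.E // e ∉ Eω} → {v : G.V // G.Interior v})
    (hinj : Function.Injective u) (hinc : ∀ e, G.Incident e.1 (u e).1) :
    ¬ ∃ w : Walk G, w.EdgesIn Eωᶜ ∧ Function.Injective w.edge ∧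
      G.Exterior w.start ∧ G.Exterior w.finish ∧ w.start ≠ w.finish :=
  abp_implies_no_exterior_path_general G Eω u hinj hinc
end
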